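/- For every s ∈ ℝ and every w ∈ ℝ with w ≠ s, the function g_s is twice differentiable at w with second derivative g_s''(w) = g_s(w) + w·(w·g_s(w) + 𝟙(w ≤ s) − Φ(s)), and this second derivative satisfies |g_s''(w)| ≤ √(2π)/4 + |w|. -/

import Mathlib

/-!
With `φ` the standard normal density, the integral defining `g_s` evaluates to
`g_s w = (Φ (min w s) - Φ s * Φ w) / φ w`, and away from `s` the fundamental theorem of
calculus gives `g_s' = w g_s + 𝟙(w ≤ s) - Φ s`; differentiating once more gives `g_s''`.

The bound on `g_s''` follows from `|g_s| ≤ √(2π)/4` and `|w g_s + 𝟙(w ≤ s) - Φ s| ≤ 1`.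
Reflecting `w ↦ -w` reduces both to the case `w ≤ s`, where `g_s w = (1 - Φ s) Φ w / φ w`.
The second bound then follows from the Mills-ratio inequalities `w (1 - Φ w) ≤ φ w` and
`-w Φ w ≤ φ w`, the first from `Φ (1 - Φ) ≤ (√(2π)/4) φ`. The gap in this last inequality is
even and vanishes at `0`, and its derivative is `φ` times a function that is concave on
`[0, ∞)` and vanishes at `0`; so on `[0, ∞)` the gap first increases and then decreases, and
it is nonnegative from `w = 2` on by the Mills-ratio bound.
-/

open MeasureTheory

noncomputable def Phi (s : ℝ) : ℝ :=
  ((ProbabilityTheory.gaussianReal 0 1) (Set.Iic s)).toReal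

noncomputable def steinG (s w : ℝ) : ℝ :=
  Real.exp (w ^ 2 / 2) *
    ∫ u in Set.Iic w, ((if u ≤ s then (1 : ℝ) else 0) - Phi s) * Real.exp (-u ^ 2 / 2)

open Real Set Filter Topology ProbabilityTheory

local notation "φ" => gaussianPDFReal 0 1

lemma hasDerivAt_integral_Iic {E : Type*} [NormedAddCommGroup E] [NormedSpace ℝ E]
    [CompleteSpace E] {f : ℝ → E} {x : ℝ} (hf : Integrable f) (hx : ContinuousAt f x) :
    HasDerivAt (fun y => ∫ u in Iic y, f u) (f x) x := by
  have hsplit (y : ℝ) :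
      ∫ u in Iic y, f u = (∫ u in Iic 0, f u) + ∫ u in (0 : ℝ)..y, f u := by
    rw [← intervalIntegral.integral_Iic_sub_Iic hf.integrableOn hf.integrableOn]
    abel
  rw [funext hsplit]
  exact (intervalIntegral.integral_hasDerivAt_right hf.intervalIntegrable
    hf.aestronglyMeasurable.stronglyMeasurableAtFilter hx).const_add _

lemma gaussianPDFReal_zero_one : φ = fun x => (√(2 * π))⁻¹ * exp (-x ^ 2 / 2) := by
  simp [gaussianPDFReal_def]

lemma gaussianPDFReal_zero_one_apply (x : ℝ) : φ x = (√(2 * π))⁻¹ * exp (-x ^ 2 / 2) := by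
  rw [gaussianPDFReal_zero_one]

lemma gaussianPDFReal_zero_one_pos (x : ℝ) : 0 < φ x :=
  gaussianPDFReal_pos _ _ _ one_ne_zero

lemma gaussianPDFReal_zero_one_neg (x : ℝ) : φ (-x) = φ x := by
  simp [gaussianPDFReal_zero_one_apply]

lemma hasDerivAt_gaussianPDFReal_zero_one (x : ℝ) : HasDerivAt φ (-x * φ x) x := by
  have hexponent : HasDerivAt (fun u : ℝ => -u ^ 2 / 2) (-x) x :=
    ((hasDerivAt_pow 2 x).neg.div_const 2).congr_deriv (by ring)
  rw [gaussianPDFReal_zero_one]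
  exact (hexponent.exp.const_mul (√(2 * π))⁻¹).congr_deriv (by ring)

lemma tendsto_gaussianPDFReal_zero_one_atBot : Tendsto φ atBot (𝓝 0) := by
  have hsq : Tendsto (fun u : ℝ => u ^ 2) atBot atTop := by
    simpa [Function.comp_def] using
      (tendsto_pow_atTop (α := ℝ) two_ne_zero).comp tendsto_neg_atBot_atTop
  have := (tendsto_exp_atBot.comp
    (tendsto_neg_atTop_atBot.comp (hsq.atTop_div_const two_pos))).const_mul (√(2 * π))⁻¹
  rw [gaussianPDFReal_zero_one]
  simpa [Function.comp_def, neg_div] using this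

lemma antitoneOn_gaussianPDFReal_zero_one : AntitoneOn φ (Ici 0) := by
  intro a ha b _ hab
  simp only [gaussianPDFReal_zero_one_apply]
  gcongr

lemma integrable_mul_gaussianPDFReal_zero_one : Integrable fun x => x * φ x := by
  simp_rw [gaussianPDFReal_zero_one_apply, mul_left_comm _ (√(2 * π))⁻¹]
  refine ((integrable_mul_exp_neg_mul_sq (b := 1 / 2) (by norm_num)).const_mul
    (√(2 * π))⁻¹).congr (ae_of_all _ fun x => ?_)
  beta_reduce; ring_nf

lemma integral_Iic_mul_gaussianPDFReal_zero_one (w : ℝ) : ∫ u in Iic w, u * φ u = -φ w := by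
  have hderiv (x : ℝ) : HasDerivAt (fun u => -φ u) (x * φ x) x :=
    (hasDerivAt_gaussianPDFReal_zero_one x).neg.congr_deriv (by ring)
  rw [integral_Iic_of_hasDerivAt_of_tendsto' (fun x _ => hderiv x)
    integrable_mul_gaussianPDFReal_zero_one.integrableOn
    (by simpa using tendsto_gaussianPDFReal_zero_one_atBot.neg), sub_zero]

lemma Phi_eq_cdf : Phi = cdf (gaussianReal 0 1) := by
  ext s; rw [cdf_eq_real]; rfl

lemma Phi_nonneg (w : ℝ) : 0 ≤ Phi w := Phi_eq_cdf ▸ cdf_nonneg _ w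

lemma Phi_le_one (w : ℝ) : Phi w ≤ 1 := Phi_eq_cdf ▸ cdf_le_one _ w

lemma monotone_Phi : Monotone Phi := Phi_eq_cdf ▸ monotone_cdf _

lemma Phi_eq_integral (s : ℝ) : Phi s = ∫ u in Iic s, φ u := by
  rw [Phi, gaussianReal_apply_eq_integral 0 one_ne_zero, ENNReal.toReal_ofReal
    (setIntegral_nonneg measurableSet_Iic fun x _ => gaussianPDFReal_nonneg _ _ _)]

lemma Phi_neg (w : ℝ) : Phi (-w) = 1 - Phi w := by
  have hint := integrable_gaussianPDFReal (0 : ℝ) 1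
  have hsplit := intervalIntegral.integral_Iic_add_Ioi (b := w) hint.integrableOn hint.integrableOn
  rw [integral_gaussianPDFReal_eq_one _ one_ne_zero] at hsplit
  have hrefl : ∫ u in Iic (-w), φ u = ∫ u in Ioi w, φ u := by
    rw [← integral_comp_neg_Ioi]
    simp only [gaussianPDFReal_zero_one_neg]
  rw [Phi_eq_integral, Phi_eq_integral, hrefl]
  linarith

lemma Phi_zero : Phi 0 = 1 / 2 := by
  have := Phi_neg 0
  rw [neg_zero] at this
  linarith

lemma hasDerivAt_Phi (x : ℝ) : HasDerivAt Phi (φ x) x := by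
  rw [show Phi = fun y => ∫ u in Iic y, φ u from funext Phi_eq_integral]
  exact hasDerivAt_integral_Iic (integrable_gaussianPDFReal _ _)
    (hasDerivAt_gaussianPDFReal_zero_one x).continuousAt

lemma neg_mul_Phi_le (w : ℝ) : -w * Phi w ≤ φ w := by
  rw [Phi_eq_integral, ← integral_const_mul, ← neg_neg (φ w),
    ← integral_Iic_mul_gaussianPDFReal_zero_one, ← integral_neg]
  refine setIntegral_mono_on ((integrable_gaussianPDFReal _ _).integrableOn.const_mul _)
    integrable_mul_gaussianPDFReal_zero_one.integrableOn.neg measurableSet_Iic fun u hu => ?_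
  rw [neg_mul_eq_neg_mul]
  exact mul_le_mul_of_nonneg_right (neg_le_neg hu) (gaussianPDFReal_nonneg _ _ _)

lemma mul_one_sub_Phi_le (w : ℝ) : w * (1 - Phi w) ≤ φ w := by
  simpa [Phi_neg, gaussianPDFReal_zero_one_neg] using neg_mul_Phi_le (-w)

noncomputable def gaussGap (w : ℝ) : ℝ := √(2 * π) / 4 * φ w - Phi w * (1 - Phi w)

noncomputable def gaussGapSlope (w : ℝ) : ℝ := 2 * Phi w - 1 - √(2 * π) / 4 * w

lemma hasDerivAt_gaussGap (w : ℝ) : HasDerivAt gaussGap (φ w * gaussGapSlope w) w :=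
  (((hasDerivAt_gaussianPDFReal_zero_one w).const_mul (√(2 * π) / 4)).sub
    ((hasDerivAt_Phi w).mul ((hasDerivAt_Phi w).const_sub 1))).congr_deriv
    (by rw [gaussGapSlope]; ring)

lemma hasDerivAt_gaussGapSlope (w : ℝ) :
    HasDerivAt gaussGapSlope (2 * φ w - √(2 * π) / 4) w :=
  ((((hasDerivAt_Phi w).const_mul 2).sub_const 1).sub
    ((hasDerivAt_id w).const_mul (√(2 * π) / 4))).congr_deriv (by ring)

lemma concaveOn_gaussGapSlope : ConcaveOn ℝ (Ici 0) gaussGapSlope := by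
  refine AntitoneOn.concaveOn_of_deriv (convex_Ici 0)
    (fun x _ => (hasDerivAt_gaussGapSlope x).continuousAt.continuousWithinAt)
    (fun x _ => (hasDerivAt_gaussGapSlope x).differentiableAt.differentiableWithinAt) ?_
  rw [interior_Ici]
  intro a ha b hb hab
  rw [(hasDerivAt_gaussGapSlope a).deriv, (hasDerivAt_gaussGapSlope b).deriv]
  linarith [antitoneOn_gaussianPDFReal_zero_one (mem_Ici.2 ha.le) (mem_Ici.2 hb.le) hab]

lemma gaussGapSlope_zero : gaussGapSlope 0 = 0 := by
  simp [gaussGapSlope, Phi_zero]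

lemma gaussGap_zero : gaussGap 0 = 0 := by
  have : √(2 * π) ≠ 0 := by positivity
  simp [gaussGap, Phi_zero, gaussianPDFReal_zero_one_apply]
  field_simp
  norm_num

lemma gaussGap_neg (w : ℝ) : gaussGap (-w) = gaussGap w := by
  rw [gaussGap, gaussGap, Phi_neg, gaussianPDFReal_zero_one_neg]
  ring

lemma gaussGap_nonneg_of_two_le {w : ℝ} (hw : 2 ≤ w) : 0 ≤ gaussGap w := by
  have hsqrt : 2 ≤ √(2 * π) := Real.le_sqrt_of_sq_le (by nlinarith [pi_gt_three])
  rw [gaussGap]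
  nlinarith [mul_one_sub_Phi_le w, Phi_nonneg w, Phi_le_one w, gaussianPDFReal_zero_one_pos w]

lemma gaussGap_nonneg_of_nonneg {w : ℝ} (hw : 0 ≤ w) : 0 ≤ gaussGap w := by
  rcases le_total 2 w with h2w | hw2
  · exact gaussGap_nonneg_of_two_le h2w
  have hcont : Continuous gaussGap :=
    continuous_iff_continuousAt.2 fun x => (hasDerivAt_gaussGap x).continuousAt
  by_cases hslope : ∀ t ∈ Icc 0 w, 0 ≤ gaussGapSlope t
  · have hmono : MonotoneOn gaussGap (Icc 0 w) :=
      monotoneOn_of_hasDerivWithinAt_nonneg (convex_Icc 0 w) hcont.continuousOn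
        (fun x _ => (hasDerivAt_gaussGap x).hasDerivWithinAt)
        (fun x hx => mul_nonneg (gaussianPDFReal_nonneg _ _ _) (hslope x (interior_subset hx)))
    simpa [gaussGap_zero] using hmono (left_mem_Icc.2 hw) (right_mem_Icc.2 hw) hw
  push Not at hslope
  obtain ⟨t, ⟨ht0, htw⟩, htneg⟩ := hslope
  have htpos : 0 < t := lt_of_le_of_ne ht0 (by rintro rfl; simp [gaussGapSlope_zero] at htneg)
  have hslope_nonpos (u : ℝ) (hu : t ≤ u) : gaussGapSlope u ≤ 0 :=
    (concaveOn_gaussGapSlope.right_le_of_le_left'' self_mem_Ici (ht0.trans hu) htpos hu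
      (by rw [gaussGapSlope_zero]; exact htneg.le)).trans htneg.le
  have hanti : AntitoneOn gaussGap (Icc w 2) :=
    antitoneOn_of_hasDerivWithinAt_nonpos (convex_Icc w 2) hcont.continuousOn
      (fun x _ => (hasDerivAt_gaussGap x).hasDerivWithinAt)
      (fun x hx => mul_nonpos_of_nonneg_of_nonpos (gaussianPDFReal_nonneg _ _ _)
        (hslope_nonpos x (htw.trans (interior_subset hx).1)))
  exact (gaussGap_nonneg_of_two_le le_rfl).trans
    (hanti (left_mem_Icc.2 hw2) (right_mem_Icc.2 hw2) hw2)

lemma Phi_mul_one_sub_Phi_le (w : ℝ) : Phi w * (1 - Phi w) ≤ √(2 * π) / 4 * φ w := by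
  rw [← sub_nonneg]
  rcases le_total 0 w with hw | hw
  · exact gaussGap_nonneg_of_nonneg hw
  · rw [← gaussGap, ← gaussGap_neg]
    exact gaussGap_nonneg_of_nonneg (neg_nonneg.2 hw)

lemma exp_neg_sq_div_two_eq_mul_gaussianPDFReal (u : ℝ) : exp (-u ^ 2 / 2) = √(2 * π) * φ u := by
  have : √(2 * π) ≠ 0 := by positivity
  rw [gaussianPDFReal_zero_one_apply]
  field_simp

lemma ite_le_sub_Phi_mul_exp_eq (s u : ℝ) :
    ((if u ≤ s then (1 : ℝ) else 0) - Phi s) * exp (-u ^ 2 / 2) =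
      √(2 * π) * ((Iic s).indicator φ u - Phi s * φ u) := by
  rw [exp_neg_sq_div_two_eq_mul_gaussianPDFReal]
  by_cases h : u ≤ s <;> simp [h] <;> ring

lemma steinG_eq (s w : ℝ) : steinG s w = (Phi (min w s) - Phi s * Phi w) / φ w := by
  have hint := integrable_gaussianPDFReal (0 : ℝ) 1
  have hexp : exp (w ^ 2 / 2) = (√(2 * π) * φ w)⁻¹ := by
    rw [← exp_neg_sq_div_two_eq_mul_gaussianPDFReal, ← exp_neg, neg_div, neg_neg]
  rw [steinG]
  simp_rw [ite_le_sub_Phi_mul_exp_eq]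
  rw [integral_const_mul, integral_sub (hint.indicator measurableSet_Iic).integrableOn
    (hint.integrableOn.const_mul _), setIntegral_indicator measurableSet_Iic, Iic_inter_Iic,
    integral_const_mul, ← Phi_eq_integral, ← Phi_eq_integral, hexp]
  have : √(2 * π) ≠ 0 := by positivity
  have := (gaussianPDFReal_zero_one_pos w).ne'
  field_simp

lemma steinG_of_le {s w : ℝ} (h : w ≤ s) : steinG s w = (1 - Phi s) * Phi w / φ w := by
  rw [steinG_eq, min_eq_left h]; ring

lemma steinG_of_lt {s w : ℝ} (h : s < w) : steinG s w = Phi s * (1 - Phi w) / φ w := by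
  rw [steinG_eq, min_eq_right h.le]; ring

lemma eventually_ite_le_eq {s x : ℝ} (hx : x ≠ s) :
    ∀ᶠ u in 𝓝 x, (if u ≤ s then (1 : ℝ) else 0) = if x ≤ s then 1 else 0 := by
  rcases hx.lt_or_gt with h | h
  · filter_upwards [Iio_mem_nhds h] with u (hu : u < s)
    simp [hu.le, h.le]
  · filter_upwards [Ioi_mem_nhds h] with u (hu : s < u)
    simp [not_le.2 hu, not_le.2 h]

lemma hasDerivAt_steinG {s x : ℝ} (hx : x ≠ s) :
    HasDerivAt (steinG s) (x * steinG s x + ((if x ≤ s then (1 : ℝ) else 0) - Phi s)) x := by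
  set f : ℝ → ℝ := fun u => ((if u ≤ s then (1 : ℝ) else 0) - Phi s) * exp (-u ^ 2 / 2)
  have hint := integrable_gaussianPDFReal (0 : ℝ) 1
  have hf : Integrable f := by
    simp_rw [f, ite_le_sub_Phi_mul_exp_eq]
    exact ((hint.indicator measurableSet_Iic).sub (hint.const_mul _)).const_mul _
  have hfx : ContinuousAt f x := by
    have hlocal : ContinuousAt
        (fun u => ((if x ≤ s then (1 : ℝ) else 0) - Phi s) * exp (-u ^ 2 / 2)) x := by
      fun_prop
    refine hlocal.congr ?_
    filter_upwards [eventually_ite_le_eq hx] with u hu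
    simp only [f, hu]
  have hexp : HasDerivAt (fun y => exp (y ^ 2 / 2)) (x * exp (x ^ 2 / 2)) x :=
    ((hasDerivAt_pow 2 x).div_const 2).exp.congr_deriv (by ring)
  have hcancel : exp (x ^ 2 / 2) * exp (-x ^ 2 / 2) = 1 := by
    rw [← exp_add, neg_div, add_neg_cancel, exp_zero]
  refine (hexp.mul (hasDerivAt_integral_Iic hf hfx)).congr_deriv ?_
  simp only [f, steinG]
  linear_combination ((if x ≤ s then (1 : ℝ) else 0) - Phi s) * hcancel

lemma hasDerivAt_deriv_steinG {s w : ℝ} (hw : w ≠ s) :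
    HasDerivAt (deriv (steinG s))
      (steinG s w + w * (w * steinG s w + (if w ≤ s then (1 : ℝ) else 0) - Phi s)) w := by
  have hderiv_eq : deriv (steinG s) =ᶠ[𝓝 w]
      fun x => x * steinG s x + ((if w ≤ s then (1 : ℝ) else 0) - Phi s) := by
    filter_upwards [eventually_ne_nhds hw, eventually_ite_le_eq hw] with x hxs hx
    rw [(hasDerivAt_steinG hxs).deriv, hx]
  refine HasDerivAt.congr_of_eventuallyEq ?_ hderiv_eq
  exact (((hasDerivAt_id w).mul (hasDerivAt_steinG hw)).add_const _).congr_deriv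
    (by simp only [id_eq]; ring)

lemma abs_mul_Phi_div_le {q w : ℝ} (hq0 : 0 ≤ q) (hq : q ≤ 1 - Phi w) :
    |q * Phi w / φ w| ≤ √(2 * π) / 4 := by
  have hφ := gaussianPDFReal_zero_one_pos w
  rw [abs_of_nonneg (div_nonneg (mul_nonneg hq0 (Phi_nonneg w)) hφ.le), div_le_iff₀ hφ]
  calc q * Phi w ≤ Phi w * (1 - Phi w) := by nlinarith [Phi_nonneg w]
    _ ≤ √(2 * π) / 4 * φ w := Phi_mul_one_sub_Phi_le w

lemma abs_mul_one_add_mul_Phi_div_le {q w : ℝ} (hq0 : 0 ≤ q) (hq : q ≤ 1 - Phi w) :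
    |q * (1 + w * Phi w / φ w)| ≤ 1 := by
  have hφ := gaussianPDFReal_zero_one_pos w
  rw [abs_le]
  rcases le_total 0 w with hw | hw
  · have hr : 0 ≤ w * Phi w / φ w := div_nonneg (mul_nonneg hw (Phi_nonneg w)) hφ.le
    have hr' : (1 - Phi w) * (w * Phi w / φ w) ≤ Phi w := by
      rw [mul_div_assoc', div_le_iff₀ hφ]
      nlinarith [mul_one_sub_Phi_le w, Phi_nonneg w]
    constructor <;> nlinarith
  · have hr : -1 ≤ w * Phi w / φ w := by
      rw [le_div_iff₀ hφ]
      linarith [neg_mul_Phi_le w]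
    have hr' : w * Phi w / φ w ≤ 0 :=
      div_nonpos_of_nonpos_of_nonneg (mul_nonpos_of_nonpos_of_nonneg hw (Phi_nonneg w)) hφ.le
    constructor <;> nlinarith [Phi_nonneg w]

lemma abs_steinG_le (s w : ℝ) : |steinG s w| ≤ √(2 * π) / 4 := by
  rcases le_or_gt w s with h | h
  · rw [steinG_of_le h]
    exact abs_mul_Phi_div_le (sub_nonneg.2 (Phi_le_one s)) (sub_le_sub_left (monotone_Phi h) 1)
  · have := abs_mul_Phi_div_le (w := -w) (Phi_nonneg s)
      (by rw [Phi_neg]; linarith [monotone_Phi h.le])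
    rwa [Phi_neg, gaussianPDFReal_zero_one_neg, ← steinG_of_lt h] at this

lemma abs_mul_steinG_add_ite_sub_Phi_le (s w : ℝ) :
    |w * steinG s w + (if w ≤ s then (1 : ℝ) else 0) - Phi s| ≤ 1 := by
  have hφ := (gaussianPDFReal_zero_one_pos w).ne'
  rcases le_or_gt w s with h | h
  · have := abs_mul_one_add_mul_Phi_div_le (sub_nonneg.2 (Phi_le_one s))
      (sub_le_sub_left (monotone_Phi h) 1)
    rw [steinG_of_le h, if_pos h]
    convert this using 2
    field_simp
    ring
  · have := abs_mul_one_add_mul_Phi_div_le (w := -w) (Phi_nonneg s)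
      (by rw [Phi_neg]; linarith [monotone_Phi h.le])
    rw [Phi_neg, gaussianPDFReal_zero_one_neg, ← abs_neg] at this
    rw [steinG_of_lt h, if_neg (not_le.2 h)]
    convert this using 2
    field_simp
    ring

/-- At every `w ≠ s`, the Stein solution `g_s` is twice differentiable: its derivative
function is differentiable at `w` with derivative
`g_s w + w * (w * g_s w + 𝟙(w ≤ s) - Φ s)`, and this second derivative is bounded in
absolute value by `√(2π)/4 + |w|`. -/
theorem steinG_second_deriv (s w : ℝ) (hw : w ≠ s) :
    HasDerivAt (deriv (steinG s))
      (steinG s w + w * (w * steinG s w + (if w ≤ s then (1 : ℝ) else 0) - Phi s)) w ∧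
    |steinG s w + w * (w * steinG s w + (if w ≤ s then (1 : ℝ) else 0) - Phi s)| ≤
      Real.sqrt (2 * Real.pi) / 4 + |w| := by
  refine ⟨hasDerivAt_deriv_steinG hw, ?_⟩
  calc |steinG s w + w * (w * steinG s w + (if w ≤ s then (1 : ℝ) else 0) - Phi s)|
      ≤ |steinG s w| + |w| * |w * steinG s w + (if w ≤ s then (1 : ℝ) else 0) - Phi s| := by
        rw [← abs_mul]; exact abs_add_le _ _
    _ ≤ √(2 * π) / 4 + |w| * 1 := by
        gcongr
        exacts [abs_steinG_le s w, abs_mul_steinG_add_ite_sub_Phi_le s w]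
    _ = √(2 * π) / 4 + |w| := by rw [mul_one]
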